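/- Let k be a field, n ≥ 1, and let f_1,…,f_m ∈ k[X_1,…,X_n] be homogeneous polynomials of degrees d_1,…,d_m with 2 ≤ d_i < l for each i, not all zero, and set I = ⟨X_1,…,X_n⟩^l + ⟨f_1,…,f_m⟩. Suppose there is an index s such that f_s ≠ 0 and d_s < d_i for all i ≠ s (a unique generator of minimal degree). Then: (a) for every M ∈ GL_n(k) with F_M(I) ⊆ I there exists α ∈ k^× such that F_M(f_s) = α·f_s; and (b) if M ∈ GL_n(k) satisfies F_M(f_i) = α_i·f_i with α_i ∈ k^× for every i, then F_M(I) ⊆ I. -/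

import Mathlib

/-!
Part (b) is formal: `F_M` maps `⟨X_1,…,X_n⟩` into itself, and the span of the `f_i` into itself
when every `f_i` is an eigenvector. For part (a), `F_M f_s` is homogeneous of degree `d_s` and lies
in `I = ⟨X⟩^l + ⟨f⟩`, so it is the degree-`d_s` component of some `a + ∑ h_i f_i` with
`a ∈ ⟨X⟩^l`. Since `d_s < l` the part `a` contributes nothing, and since `d_s < d_i` for `i ≠ s`
only `h_s(0) f_s` survives. The scalar `h_s(0)` is nonzero because `F_M` is injective.
-/

open MvPolynomial

namespace MvPolynomial

section HomogeneousComponent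

variable {σ R : Type*} [CommSemiring R]

attribute [local instance] gradedAlgebra in
theorem homogeneousComponent_mul_of_isHomogeneous_right {q : MvPolynomial σ R} {d : ℕ}
    (hq : q.IsHomogeneous d) (p : MvPolynomial σ R) (e : ℕ) :
    homogeneousComponent e (p * q) =
      if d ≤ e then homogeneousComponent (e - d) p * q else 0 := by
  classical
  rw [← decomposition.decompose'_apply, ← decomposition.decompose'_apply]
  exact DirectSum.coe_decompose_mul_of_right_mem (homogeneousSubmodule σ R) e hq

theorem homogeneousComponent_eq_zero_of_mem_pow_idealOfVars {l e : ℕ} (hel : e < l)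
    {p : MvPolynomial σ R} (hp : p ∈ idealOfVars σ R ^ l) :
    homogeneousComponent e p = 0 := by
  ext x
  rw [coeff_homogeneousComponent, coeff_zero]
  split_ifs with hx
  · exact (mem_pow_idealOfVars_iff' l p).mp hp x (hx ▸ hel)
  · rfl

variable {ι : Type*} [Fintype ι] {f : ι → MvPolynomial σ R} {d : ι → ℕ} {s : ι}

theorem homogeneousComponent_sum_mul_of_forall_lt (hf : ∀ i, (f i).IsHomogeneous (d i))
    (hmin : ∀ i, i ≠ s → d s < d i) (h : ι → MvPolynomial σ R) :
    homogeneousComponent (d s) (∑ i, h i * f i) = C (coeff 0 (h s)) * f s := by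
  rw [map_sum, Finset.sum_eq_single_of_mem s (Finset.mem_univ s)]
  · rw [homogeneousComponent_mul_of_isHomogeneous_right (hf s), if_pos le_rfl, Nat.sub_self,
      homogeneousComponent_zero]
  · intro i _ his
    rw [homogeneousComponent_mul_of_isHomogeneous_right (hf i), if_neg (hmin i his).not_ge]

theorem exists_eq_C_mul_of_mem_pow_idealOfVars_sup_span {l : ℕ}
    (hf : ∀ i, (f i).IsHomogeneous (d i)) (hmin : ∀ i, i ≠ s → d s < d i) (hl : d s < l)
    {g : MvPolynomial σ R} (hg : g.IsHomogeneous (d s))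
    (hgI : g ∈ idealOfVars σ R ^ l ⊔ Ideal.span (Set.range f)) :
    ∃ c, g = C c * f s := by
  obtain ⟨a, ha, b, hb, rfl⟩ := Submodule.mem_sup.mp hgI
  obtain ⟨h, rfl⟩ := Ideal.mem_span_range_iff_exists_fun.mp hb
  refine ⟨coeff 0 (h s), ?_⟩
  rw [← homogeneousComponent_eq_self hg, map_add,
    homogeneousComponent_eq_zero_of_mem_pow_idealOfVars hl ha, zero_add,
    homogeneousComponent_sum_mul_of_forall_lt hf hmin]

end HomogeneousComponent

section LinearSubst

variable {σ R : Type*} [Fintype σ] [CommSemiring R]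

noncomputable def linearSubst (M : Matrix σ σ R) : MvPolynomial σ R →ₐ[R] MvPolynomial σ R :=
  aeval fun j => ∑ i, C (M i j) * X i

@[simp]
theorem linearSubst_X (M : Matrix σ σ R) (j : σ) :
    linearSubst M (X j) = ∑ i, C (M i j) * X i :=
  aeval_X _ _

theorem linearSubst_comp (M N : Matrix σ σ R) :
    (linearSubst N).comp (linearSubst M) = linearSubst (N * M) := by
  refine algHom_ext fun j => ?_
  simp only [AlgHom.comp_apply, linearSubst_X, map_sum, map_mul, algHom_C, algebraMap_eq,
    Matrix.mul_apply, Finset.mul_sum, Finset.sum_mul]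
  rw [Finset.sum_comm]
  refine Finset.sum_congr rfl fun i _ => Finset.sum_congr rfl fun t _ => ?_
  ring

variable [DecidableEq σ] in
theorem linearSubst_one : linearSubst (1 : Matrix σ σ R) = AlgHom.id R _ := by
  classical
  refine algHom_ext fun j => ?_
  simp [Matrix.one_apply]

variable [DecidableEq σ] in
theorem linearSubst_injective {M : Matrix σ σ R} (hM : IsUnit M) :
    Function.Injective (linearSubst M) := by
  obtain ⟨N, hNM⟩ := hM.exists_left_inv
  refine Function.LeftInverse.injective (g := linearSubst N) fun p => ?_
  rw [← AlgHom.comp_apply, linearSubst_comp, hNM, linearSubst_one, AlgHom.id_apply]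

theorem IsHomogeneous.linearSubst {p : MvPolynomial σ R} {d : ℕ} (hp : p.IsHomogeneous d)
    (M : Matrix σ σ R) : (linearSubst M p).IsHomogeneous d := by
  have hX (j : σ) : (∑ i, C (M i j) * X i).IsHomogeneous 1 :=
    IsHomogeneous.sum _ _ 1 fun i _ => isHomogeneous_C_mul_X _ _
  rw [← one_mul d]
  exact hp.aeval _ hX

theorem map_linearSubst_idealOfVars_le (M : Matrix σ σ R) :
    (idealOfVars σ R).map (linearSubst M) ≤ idealOfVars σ R := by
  rw [Ideal.map_span, Ideal.span_le]
  rintro _ ⟨_, ⟨j, rfl⟩, rfl⟩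
  rw [linearSubst_X]
  exact Ideal.sum_mem _ fun i _ => Ideal.mul_mem_left _ _ (Ideal.subset_span ⟨i, rfl⟩)

end LinearSubst

end MvPolynomial

theorem Ideal.map_span_range_le_of_forall_eq_mul {A F ι : Type*} [CommSemiring A]
    [FunLike F A A] [RingHomClass F A A] (φ : F) {f : ι → A}
    (hf : ∀ i, ∃ c, φ (f i) = c * f i) :
    (Ideal.span (Set.range f)).map φ ≤ Ideal.span (Set.range f) := by
  rw [Ideal.map_span, Ideal.span_le]
  rintro _ ⟨_, ⟨i, rfl⟩, rfl⟩
  obtain ⟨c, hc⟩ := hf i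
  exact hc ▸ Ideal.mul_mem_left _ _ (Ideal.subset_span ⟨i, rfl⟩)

theorem stmt_10_general (k : Type*) [Field k] (n l m : ℕ)
    (f : Fin m → MvPolynomial (Fin n) k) (d : Fin m → ℕ)
    (hf : ∀ i, (f i).IsHomogeneous (d i)) (hdl : ∀ i, d i < l)
    (s : Fin m) (hs : f s ≠ 0) (hmin : ∀ i, i ≠ s → d s < d i)
    (I : Ideal (MvPolynomial (Fin n) k))
    (hI : I = (Ideal.span (Set.range (X : Fin n → MvPolynomial (Fin n) k))) ^ l
            + Ideal.span (Set.range f)) :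
    (∀ M : GL (Fin n) k,
        (∀ g ∈ I,
            aeval (fun j => ∑ i, C ((M : Matrix (Fin n) (Fin n) k) i j) * X i) g ∈ I) →
        ∃ α : kˣ,
          aeval (fun j => ∑ i, C ((M : Matrix (Fin n) (Fin n) k) i j) * X i) (f s)
            = (α : k) • f s) ∧
    (∀ M : GL (Fin n) k,
        (∀ i : Fin m, ∃ α : kˣ,
            aeval (fun j => ∑ i', C ((M : Matrix (Fin n) (Fin n) k) i' j) * X i') (f i)
              = (α : k) • f i) →
        ∀ g ∈ I,
          aeval (fun j => ∑ i, C ((M : Matrix (Fin n) (Fin n) k) i j) * X i) g ∈ I) := by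
  subst hI
  refine ⟨fun M hM => ?_, fun M hM g hg => ?_⟩
  · obtain ⟨c, hc⟩ := exists_eq_C_mul_of_mem_pow_idealOfVars_sup_span hf hmin (hdl s)
      ((hf s).linearSubst (M : Matrix (Fin n) (Fin n) k))
      (hM _ (Submodule.mem_sup_right (Ideal.subset_span ⟨s, rfl⟩)))
    have hc0 : c ≠ 0 := by
      rintro rfl
      rw [map_zero, zero_mul, ← map_zero (linearSubst (M : Matrix (Fin n) (Fin n) k))] at hc
      exact hs (linearSubst_injective M.isUnit hc)
    exact ⟨Units.mk0 c hc0, by rw [smul_eq_C_mul]; exact hc⟩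
  · have hmap : Ideal.map (linearSubst (M : Matrix (Fin n) (Fin n) k))
        (idealOfVars (Fin n) k ^ l ⊔ Ideal.span (Set.range f)) ≤
        idealOfVars (Fin n) k ^ l ⊔ Ideal.span (Set.range f) := by
      rw [Ideal.map_sup, Ideal.map_pow]
      refine sup_le_sup (Ideal.pow_right_mono (map_linearSubst_idealOfVars_le _) l)
        (Ideal.map_span_range_le_of_forall_eq_mul _ fun i => ?_)
      obtain ⟨α, hα⟩ := hM i
      exact ⟨C (α : k), by rw [← smul_eq_C_mul]; exact hα⟩
    exact hmap (Ideal.mem_map_of_mem _ hg)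

/-- paper's Proposition 5.32: `∩ᵢ Sim(fᵢ) ⊆ Im(Φ_A) ⊆ Sim(f_s)`. Let
`f_1,…,f_m` be homogeneous polynomials of degrees `d_i` with `2 ≤ d_i < l`, not all zero, and
`I = ⟨X_1,…,X_n⟩^l + ⟨f_1,…,f_m⟩`.  Assume there is an index `s` with `f_s ≠ 0` and
`d_s < d_i` for all `i ≠ s`.  Then (a) every `M ∈ GL_n(k)` with `F_M(I) ⊆ I` satisfies
`F_M f_s = α • f_s` for some `α ∈ k^×`; and (b) if `F_M f_i = α_i • f_i` with `α_i ∈ k^×` for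
every `i`, then `F_M(I) ⊆ I`. -/
theorem stmt_10 (k : Type*) [Field k] (n l m : ℕ) (hn : 1 ≤ n)
    (f : Fin m → MvPolynomial (Fin n) k) (d : Fin m → ℕ)
    (hf : ∀ i, (f i).IsHomogeneous (d i)) (hd2 : ∀ i, 2 ≤ d i) (hdl : ∀ i, d i < l)
    (hnz : ∃ i, f i ≠ 0)
    (s : Fin m) (hs : f s ≠ 0) (hmin : ∀ i, i ≠ s → d s < d i)
    (I : Ideal (MvPolynomial (Fin n) k))
    (hI : I = (Ideal.span (Set.range (X : Fin n → MvPolynomial (Fin n) k))) ^ l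
            + Ideal.span (Set.range f)) :
    (∀ M : GL (Fin n) k,
        (∀ g ∈ I,
            aeval (fun j => ∑ i, C ((M : Matrix (Fin n) (Fin n) k) i j) * X i) g ∈ I) →
        ∃ α : kˣ,
          aeval (fun j => ∑ i, C ((M : Matrix (Fin n) (Fin n) k) i j) * X i) (f s)
            = (α : k) • f s) ∧
    (∀ M : GL (Fin n) k,
        (∀ i : Fin m, ∃ α : kˣ,
            aeval (fun j => ∑ i', C ((M : Matrix (Fin n) (Fin n) k) i' j) * X i') (f i)
              = (α : k) • f i) →
        ∀ g ∈ I,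
          aeval (fun j => ∑ i, C ((M : Matrix (Fin n) (Fin n) k) i j) * X i) g ∈ I) :=
  stmt_10_general k n l m f d hf hdl s hs hmin I hI
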